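/- arXiv:2411.17524 — 5 statements merged into one kernel-verified Lean document; each statement's English description precedes it below -/
import Mathlib

section
/- For each k ≥ 2, the set F'_k of non-frozen configurations with exactly k particles is invariant under allowed jumps: if η ∈ F'_k and η ↦ η^{x,x+1} is an allowed jump, then η^{x,x+1} ∈ F'_k. -/
def swapConf (η : ℤ → Bool) (x : ℤ) : ℤ → Bool :=
  fun y => if y = x then η (x + 1) else if y = x + 1 then η x else η y

def Frozen (η : ℤ → Bool) : Prop :=
  ∀ x : ℤ, η x = true → η (x + 1) = false ∧ η (x + 2) = false

/-! After an allowed jump the moving particle sits at distance at most two from the particle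
at `x - 1` or `x + 2` that enabled the jump, so the new configuration is not frozen.
The particle count is preserved because a jump is a relabelling of sites by a transposition. -/

lemma swapConf_eq_comp (η : ℤ → Bool) (x : ℤ) :
    swapConf η x = η ∘ Equiv.swap x (x + 1) := by
  funext y
  by_cases h1 : y = x <;> by_cases h2 : y = x + 1 <;>
    simp [swapConf, Equiv.swap_apply_def, h1, h2]

lemma setOf_swapConf_eq_preimage (η : ℤ → Bool) (x : ℤ) :
    {y | swapConf η x y = true} = Equiv.swap x (x + 1) ⁻¹' {y | η y = true} := by
  rw [swapConf_eq_comp]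
  rfl

lemma Set.Finite.setOf_swapConf {η : ℤ → Bool} (hfin : {y | η y = true}.Finite) (x : ℤ) :
    {y | swapConf η x y = true}.Finite := by
  rw [setOf_swapConf_eq_preimage]
  exact hfin.preimage (Equiv.injective _).injOn

lemma ncard_setOf_swapConf (η : ℤ → Bool) (x : ℤ) :
    {y | swapConf η x y = true}.ncard = {y | η y = true}.ncard := by
  rw [setOf_swapConf_eq_preimage, ← Equiv.image_symm_eq_preimage,
    Set.ncard_image_of_injective _ (Equiv.injective _)]

lemma not_frozen_of_lt_of_le_add_two {η : ℤ → Bool} {a b : ℤ} (ha : η a = true)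
    (hb : η b = true) (hab : a < b) (hba : b ≤ a + 2) : ¬ Frozen η := by
  intro hF
  obtain ⟨h1, h2⟩ := hF a ha
  obtain rfl | rfl : b = a + 1 ∨ b = a + 2 := by omega
  all_goals simp_all

lemma not_frozen_swapConf {η : ℤ → Bool} {x : ℤ}
    (hedge : η (x - 1) = true ∨ η (x + 2) = true) (hne : η x ≠ η (x + 1)) :
    ¬ Frozen (swapConf η x) := by
  have hsx : swapConf η x x = η (x + 1) := by simp [swapConf]
  have hsx1 : swapConf η x (x + 1) = η x := by simp [swapConf]
  have hsm1 : swapConf η x (x - 1) = η (x - 1) := by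
    simp [swapConf, show x - 1 ≠ x + 1 by omega]
  have hsp2 : swapConf η x (x + 2) = η (x + 2) := by simp [swapConf]
  cases hx : η x with
  | true =>
    rcases hedge with h | h
    · exact not_frozen_of_lt_of_le_add_two (hsm1.trans h) (hsx1.trans hx) (by omega) (by omega)
    · exact not_frozen_of_lt_of_le_add_two (hsx1.trans hx) (hsp2.trans h) (by omega) (by omega)
  | false =>
    have hx1 : η (x + 1) = true := by
      rw [hx] at hne
      simpa using hne.symm
    rcases hedge with h | h
    · exact not_frozen_of_lt_of_le_add_two (hsm1.trans h) (hsx.trans hx1) (by omega) (by omega)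
    · exact not_frozen_of_lt_of_le_add_two (hsx.trans hx1) (hsp2.trans h) (by omega) (by omega)

theorem Fk_invariant_general (k : ℕ) (η : ℤ → Bool)
    (hfin : {x : ℤ | η x = true}.Finite) (hcard : {x : ℤ | η x = true}.ncard = k)
    (x : ℤ)
    (hallowed : (η (x - 1) = true ∨ η (x + 2) = true) ∧ η x ≠ η (x + 1)) :
    ¬ Frozen (swapConf η x) ∧ {y : ℤ | swapConf η x y = true}.Finite ∧
      {y : ℤ | swapConf η x y = true}.ncard = k :=
  ⟨not_frozen_swapConf hallowed.1 hallowed.2, hfin.setOf_swapConf x,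
    (ncard_setOf_swapConf η x).trans hcard⟩

theorem Fk_invariant (k : ℕ) (hk : 2 ≤ k) (η : ℤ → Bool)
    (hfin : {x : ℤ | η x = true}.Finite) (hcard : {x : ℤ | η x = true}.ncard = k)
    (hnf : ¬ Frozen η) (x : ℤ)
    (hallowed : (η (x - 1) = true ∨ η (x + 2) = true) ∧ η x ≠ η (x + 1)) :
    ¬ Frozen (swapConf η x) ∧ {y : ℤ | swapConf η x y = true}.Finite ∧
      {y : ℤ | swapConf η x y = true}.ncard = k :=
  Fk_invariant_general k η hfin hcard x hallowed
end

section
/- The quantity Σ_x (η(x)η(x+1) + η(x)η(x+2)) (counting pairs of particles at distance 1 or 2) being positive and finite is preserved by allowed jumps: if η has finitely many and at least one such pair, then so does η^{x,x+1} after any allowed jump. -/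
def closePairs (η : ℤ → Bool) : Set ℤ :=
  {x : ℤ | η x = true ∧ (η (x + 1) = true ∨ η (x + 2) = true)}

section

variable {η : ℤ → Bool} {x y : ℤ}

@[simp]
theorem swapConf_self : swapConf η x x = η (x + 1) := if_pos rfl

@[simp]
theorem swapConf_add_one : swapConf η x (x + 1) = η x := by
  simp [swapConf]

theorem swapConf_of_ne (h₀ : y ≠ x) (h₁ : y ≠ x + 1) : swapConf η x y = η y := by
  simp [swapConf, h₀, h₁]

theorem mem_closePairs_of_swapConf (hy : y ∈ closePairs (swapConf η x))
    (h : y < x - 2 ∨ x + 1 < y) : y ∈ closePairs η := by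
  have h₀ : swapConf η x y = η y := swapConf_of_ne (by omega) (by omega)
  have h₁ : swapConf η x (y + 1) = η (y + 1) := swapConf_of_ne (by omega) (by omega)
  have h₂ : swapConf η x (y + 2) = η (y + 2) := swapConf_of_ne (by omega) (by omega)
  simpa only [closePairs, Set.mem_ofPred_eq, h₀, h₁, h₂] using hy

theorem closePairs_swapConf_subset :
    closePairs (swapConf η x) ⊆ closePairs η ∪ Set.Icc (x - 2) (x + 1) := fun y hy => by
  by_cases h : y < x - 2 ∨ x + 1 < y
  · exact Or.inl (mem_closePairs_of_swapConf hy h)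
  · exact Or.inr ⟨by omega, by omega⟩

theorem Set.Finite.closePairs_swapConf (h : (closePairs η).Finite) :
    (closePairs (swapConf η x)).Finite :=
  (h.union (Set.finite_Icc _ _)).subset closePairs_swapConf_subset

theorem closePairs_swapConf_nonempty
    (hallowed : (η (x - 1) = true ∨ η (x + 2) = true) ∧ η x ≠ η (x + 1)) :
    (closePairs (swapConf η x)).Nonempty := by
  obtain ⟨hnbr, hne⟩ := hallowed
  have hl : swapConf η x (x - 1) = η (x - 1) := swapConf_of_ne (by omega) (by omega)
  have hr : swapConf η x (x + 2) = η (x + 2) := swapConf_of_ne (by omega) (by omega)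
  have e₁ : x - 1 + 1 = x := sub_add_cancel x 1
  have e₂ : x - 1 + 2 = x + 1 := by ring
  have e₃ : x + 1 + 1 = x + 2 := by ring
  cases hx : η x with
  | false =>
    have hx₁ : η (x + 1) = true := by simpa [hx] using hne.symm
    rcases hnbr with hn | hn
    · exact ⟨x - 1, by simp [closePairs, hl, e₁, hn, hx₁]⟩
    · exact ⟨x, by simp [closePairs, hr, hn, hx₁]⟩
  | true =>
    rcases hnbr with hn | hn
    · exact ⟨x - 1, by simp [closePairs, hl, e₂, hn, hx]⟩
    · exact ⟨x + 1, by simp [closePairs, e₃, hr, hn, hx]⟩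

end

theorem closePairs_invariant_general (η : ℤ → Bool)
    (hfin : (closePairs η).Finite) (x : ℤ)
    (hallowed : (η (x - 1) = true ∨ η (x + 2) = true) ∧ η x ≠ η (x + 1)) :
    (closePairs (swapConf η x)).Finite ∧ (closePairs (swapConf η x)).Nonempty :=
  ⟨hfin.closePairs_swapConf, closePairs_swapConf_nonempty hallowed⟩

theorem closePairs_invariant (η : ℤ → Bool)
    (hfin : (closePairs η).Finite) (hpos : (closePairs η).Nonempty) (x : ℤ)
    (hallowed : (η (x - 1) = true ∨ η (x + 2) = true) ∧ η x ≠ η (x + 1)) :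
    (closePairs (swapConf η x)).Finite ∧ (closePairs (swapConf η x)).Nonempty :=
  closePairs_invariant_general η hfin x hallowed
end

section
/- For a finite interval Λ of ℤ with empty (zero) boundary condition, if σ, σ' ∈ {0,1}^Λ both contain a mobile cluster (two particles at distance at most 2 within Λ) and have the same number of particles, then σ and σ' are connected inside Λ by a finite sequence of allowed jumps inside Λ. -/
/-- An allowed jump inside the interval `[a,b]` with empty (zero) boundary condition,
for configurations on `ℤ` that vanish outside `[a,b]`. -/
def JumpInside (a b : ℤ) (σ σ' : ℤ → Bool) : Prop :=
  ∃ z : ℤ, z ∈ Set.Icc a b ∧ z + 1 ∈ Set.Icc a b ∧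
    (σ (z - 1) = true ∨ σ (z + 2) = true) ∧ σ z ≠ σ (z + 1) ∧ σ' = swapConf σ z

/-- `σ` contains a mobile cluster inside `[a,b]`. -/
def HasMobileCluster (a b : ℤ) (σ : ℤ → Bool) : Prop :=
  ∃ x y : ℤ, x ∈ Set.Icc a b ∧ y ∈ Set.Icc a b ∧ (|x - y| = 1 ∨ |x - y| = 2) ∧
    σ x = true ∧ σ y = true

/-!
Jumps are reversible and preserve the number of particles in `[a, b]`, so it suffices to
connect every configuration with a mobile cluster to the configuration whose particles are
packed against `b`. Until that configuration is reached, some particle can be moved to the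
right while a mobile cluster survives, which decreases `∑ (b - z)` over the particles `z`:
a pattern `101` or a pair followed by a hole allows a single jump; otherwise the rightmost
pair sits at `b`, and a pair of the packed block travels left through the empty gap, picks
up the rightmost particle outside the block and travels back as a triple.
-/

open Function Relation

section

variable {a b : ℤ} {σ : ℤ → Bool}

def moveParticle (σ : ℤ → Bool) (p q : ℤ) : ℤ → Bool :=
  update (update σ p false) q true

lemma moveParticle_apply_of_eq_target {p q y : ℤ} (h : y = q) :
    moveParticle σ p q y = true := by
  simp [moveParticle, h]

lemma moveParticle_apply_of_eq_source {p q y : ℤ} (h : y = p) (hpq : p ≠ q) :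
    moveParticle σ p q y = false := by
  simp [moveParticle, h, hpq]

lemma moveParticle_apply_of_ne {p q y : ℤ} (hp : y ≠ p) (hq : y ≠ q) :
    moveParticle σ p q y = σ y := by
  simp [moveParticle, hp, hq]

lemma moveParticle_apply {p q y : ℤ} :
    moveParticle σ p q y = if y = q then true else if y = p then false else σ y := by
  simp only [moveParticle, update_apply]

lemma moveParticle_moveParticle {p q r : ℤ} (hq : σ q = false) :
    moveParticle (moveParticle σ p q) q r = moveParticle σ p r := by
  ext y
  simp only [moveParticle_apply]
  split_ifs <;> simp_all

lemma moveParticle_relay {p q r : ℤ} (hq : σ q = true) (hpq : p ≠ q) (hpr : p ≠ r) :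
    moveParticle (moveParticle σ q r) p q = moveParticle σ p r := by
  ext y
  simp only [moveParticle_apply]
  split_ifs <;> simp_all

lemma swapConf_eq_moveParticle_succ {z : ℤ} (h : σ z = true) (h₁ : σ (z + 1) = false) :
    swapConf σ z = moveParticle σ z (z + 1) := by
  ext y
  simp only [swapConf, moveParticle, update_apply]
  split_ifs <;> simp_all

lemma swapConf_eq_moveParticle_pred {z : ℤ} (h : σ z = false) (h₁ : σ (z + 1) = true) :
    swapConf σ z = moveParticle σ (z + 1) z := by
  ext y
  simp only [swapConf, moveParticle, update_apply]
  split_ifs <;> simp_all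

lemma JumpInside.symm {τ : ℤ → Bool} : JumpInside a b σ τ → JumpInside a b τ σ := by
  rintro ⟨z, hz, hz₁, hfac, hne, rfl⟩
  have hfar : ∀ y, y ≠ z → y ≠ z + 1 → swapConf σ z y = σ y := fun y h₁ h₂ => by
    simp [swapConf, h₁, h₂]
  refine ⟨z, hz, hz₁, ?_, ?_, ?_⟩
  · rwa [hfar _ (by omega) (by omega), hfar _ (by omega) (by omega)]
  · simpa [swapConf] using hne.symm
  · ext y
    simp only [swapConf]
    split_ifs <;> simp_all

instance : Std.Symm (JumpInside a b) := ⟨fun _ _ => JumpInside.symm⟩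

lemma jumpInside_moveParticle_succ {z : ℤ} (ha : a ≤ z) (hb : z + 1 ≤ b) (h : σ z = true)
    (h₁ : σ (z + 1) = false) (hfac : σ (z - 1) = true ∨ σ (z + 2) = true) :
    JumpInside a b σ (moveParticle σ z (z + 1)) :=
  ⟨z, ⟨ha, by omega⟩, ⟨by omega, hb⟩, hfac, by simp [h, h₁],
    swapConf_eq_moveParticle_succ h h₁ |>.symm⟩

lemma jumpInside_moveParticle_pred {z : ℤ} (ha : a ≤ z) (hb : z + 1 ≤ b) (h : σ z = false)
    (h₁ : σ (z + 1) = true) (hfac : σ (z - 1) = true ∨ σ (z + 2) = true) :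
    JumpInside a b σ (moveParticle σ (z + 1) z) :=
  ⟨z, ⟨ha, by omega⟩, ⟨by omega, hb⟩, hfac, by simp [h, h₁],
    swapConf_eq_moveParticle_pred h h₁ |>.symm⟩

lemma reflTransGen_pair_slide_left {x : ℤ} (ha : a ≤ x) (hb : x + 2 ≤ b)
    (h : σ x = false) (h₁ : σ (x + 1) = true) (h₂ : σ (x + 2) = true) :
    ReflTransGen (JumpInside a b) σ (moveParticle σ (x + 2) x) := by
  let σ₁ := moveParticle σ (x + 1) x
  have j₁ : JumpInside a b σ σ₁ :=
    jumpInside_moveParticle_pred ha (by omega) h h₁ (.inr h₂)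
  have j₂ : JumpInside a b σ₁ (moveParticle σ₁ (x + 2) (x + 1)) := by
    simpa [add_assoc] using jumpInside_moveParticle_pred (a := a) (b := b) (σ := σ₁)
      (z := x + 1) (by omega) (by omega)
      (by simp (disch := omega) [σ₁, moveParticle_apply_of_eq_source])
      (by simp (disch := omega) [σ₁, moveParticle_apply_of_ne, add_assoc, h₂])
      (.inl (by simp (disch := omega) [σ₁, moveParticle_apply_of_eq_target]))
  rw [← moveParticle_relay h₁ (by omega) (by omega)]
  exact .head j₁ (.single j₂)

lemma reflTransGen_triple_slide_right {x : ℤ} (ha : a ≤ x) (hb : x + 3 ≤ b)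
    (h : σ x = true) (h₁ : σ (x + 1) = true) (h₂ : σ (x + 2) = true)
    (h₃ : σ (x + 3) = false) :
    ReflTransGen (JumpInside a b) σ (moveParticle σ x (x + 3)) := by
  let σ₁ := moveParticle σ (x + 2) (x + 3)
  let σ₂ := moveParticle σ₁ (x + 1) (x + 2)
  have j₁ : JumpInside a b σ σ₁ := by
    simpa [add_assoc] using jumpInside_moveParticle_succ (a := a) (b := b) (z := x + 2)
      (by omega) (by omega) h₂ (by simpa [add_assoc]) (.inl (by simpa [add_sub_assoc]))
  have j₂ : JumpInside a b σ₁ σ₂ := by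
    simpa [add_assoc] using jumpInside_moveParticle_succ (a := a) (b := b) (σ := σ₁)
      (z := x + 1) (by omega) (by omega)
      (by simp (disch := omega) [σ₁, moveParticle_apply_of_ne, h₁])
      (by simp (disch := omega) [σ₁, moveParticle_apply_of_eq_source, add_assoc])
      (.inl (by simp (disch := omega) [σ₁, moveParticle_apply_of_ne, h]))
  have j₃ : JumpInside a b σ₂ (moveParticle σ₂ x (x + 1)) :=
    jumpInside_moveParticle_succ ha (by omega)
      (by simp (disch := omega) [σ₂, σ₁, moveParticle_apply_of_ne, h])
      (by simp (disch := omega) [σ₂, moveParticle_apply_of_eq_source])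
      (.inr (by simp (disch := omega) [σ₂, moveParticle_apply_of_eq_target]))
  rw [← moveParticle_relay h₁ (by omega) (by omega),
    ← moveParticle_relay (q := x + 2) h₂ (by omega) (by omega)]
  exact .head j₁ (.head j₂ (.single j₃))

/-- The pair at `h + 1, h + 2` slides one site left, fetches the particle at `s` to `h - 1`
recursively, and the triple `h - 1, h, h + 1` slides back one site right. -/
lemma reflTransGen_fetch {s h : ℤ} (hs : a ≤ s) (hsh : s < h) (hb : h + 2 ≤ b)
    (hσs : σ s = true) (hgap : ∀ t, s < t → t ≤ h → σ t = false)
    (h₁ : σ (h + 1) = true) (h₂ : σ (h + 2) = true) :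
    ReflTransGen (JumpInside a b) σ (moveParticle σ s h) := by
  induction h, (show s + 1 ≤ h by omega) using Int.leInduction generalizing σ with
  | base =>
    exact .single (jumpInside_moveParticle_succ hs (by omega) hσs (hgap _ (by omega) le_rfl)
      (.inr (by simpa [add_assoc] using h₁)))
  | succ n hn ih =>
    replace h₁ : σ (n + 2) = true := by simpa [add_assoc] using h₁
    replace h₂ : σ (n + 3) = true := by simpa [add_assoc] using h₂
    let σ₁ := moveParticle σ (n + 3) (n + 1)
    let σ₂ := moveParticle σ₁ s n
    have slide : ReflTransGen (JumpInside a b) σ σ₁ := by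
      simpa [add_assoc] using reflTransGen_pair_slide_left (a := a) (b := b) (x := n + 1)
        (by omega) (by omega) (hgap _ (by omega) le_rfl) (by simpa [add_assoc] using h₁)
        (by simpa [add_assoc] using h₂)
    have fetch : ReflTransGen (JumpInside a b) σ₁ σ₂ := ih (by omega) (by omega)
      (by simp (disch := omega) [σ₁, moveParticle_apply_of_ne, hσs])
      (fun t hst htn => by simp (disch := omega) [σ₁, moveParticle_apply_of_ne, hgap t hst])
      (by simp (disch := omega) [σ₁, moveParticle_apply_of_eq_target])
      (by simp (disch := omega) [σ₁, moveParticle_apply_of_ne, h₁])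
    have slide' : ReflTransGen (JumpInside a b) σ₂ (moveParticle σ₂ n (n + 3)) :=
      reflTransGen_triple_slide_right (by omega) (by omega)
        (by simp (disch := omega) [σ₂, moveParticle_apply_of_eq_target])
        (by simp (disch := omega) [σ₂, σ₁, moveParticle_apply_of_ne,
          moveParticle_apply_of_eq_target])
        (by simp (disch := omega) [σ₂, σ₁, moveParticle_apply_of_ne, h₁])
        (by simp (disch := omega) [σ₂, σ₁, moveParticle_apply_of_ne,
          moveParticle_apply_of_eq_source])
    have hσ₁n : σ₁ n = false := by
      simp (disch := omega) [σ₁, moveParticle_apply_of_ne, hgap n (by omega) (by omega)]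
    rw [moveParticle_moveParticle hσ₁n, moveParticle_relay h₂ (by omega) (by omega)] at slide'
    exact slide.trans (fetch.trans slide')

def SupportedIn (a b : ℤ) (σ : ℤ → Bool) : Prop :=
  ∀ z, z ∉ Set.Icc a b → σ z = false

lemma SupportedIn.mem (hσ : SupportedIn a b σ) {z : ℤ} (hz : σ z = true) :
    a ≤ z ∧ z ≤ b := by
  by_contra h
  simp [hσ z h] at hz

lemma SupportedIn.moveParticle (hσ : SupportedIn a b σ) {p q : ℤ} (hq : a ≤ q ∧ q ≤ b) :
    SupportedIn a b (moveParticle σ p q) := fun z hz => by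
  rw [moveParticle_apply]
  split_ifs with h₁
  · exact absurd (h₁ ▸ hq) hz
  · rfl
  · exact hσ z hz

noncomputable def particles (a b : ℤ) (σ : ℤ → Bool) : Finset ℤ :=
  (Finset.Icc a b).filter (fun z => σ z = true)

noncomputable def rightPotential (a b : ℤ) (σ : ℤ → Bool) : ℕ :=
  ∑ z ∈ particles a b σ, (b - z).toNat

lemma mem_particles {z : ℤ} :
    z ∈ particles a b σ ↔ (a ≤ z ∧ z ≤ b) ∧ σ z = true := by
  simp [particles]

lemma particles_moveParticle {p q : ℤ} (hp : p ∈ particles a b σ) (hq : a ≤ q ∧ q ≤ b)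
    (hσq : σ q = false) :
    particles a b (moveParticle σ p q) = insert q ((particles a b σ).erase p) := by
  ext z
  simp only [mem_particles, Finset.mem_insert, Finset.mem_erase, moveParticle_apply] at hp ⊢
  split_ifs <;> simp_all

lemma card_particles_moveParticle {p q : ℤ} (hp : p ∈ particles a b σ)
    (hq : a ≤ q ∧ q ≤ b) (hσq : σ q = false) :
    (particles a b (moveParticle σ p q)).card = (particles a b σ).card := by
  rw [particles_moveParticle hp hq hσq,
    Finset.card_insert_of_notMem (by simp [mem_particles, hσq]), Finset.card_erase_add_one hp]

lemma rightPotential_moveParticle_lt {p q : ℤ} (hp : p ∈ particles a b σ)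
    (hq : a ≤ q ∧ q ≤ b) (hσq : σ q = false) (hpq : p < q) :
    rightPotential a b (moveParticle σ p q) < rightPotential a b σ := by
  unfold rightPotential
  rw [particles_moveParticle hp hq hσq, Finset.sum_insert (by simp [mem_particles, hσq]),
    ← Finset.sum_erase_add _ _ hp]
  omega

def IsRightPacked (b : ℤ) (σ : ℤ → Bool) : Prop :=
  ∀ s h, s < h → h ≤ b → σ s = true → σ h = true

lemma IsRightPacked.apply_eq_true_iff (hpack : IsRightPacked b σ) (hσ : SupportedIn a b σ)
    (z : ℤ) : σ z = true ↔ b + 1 - (particles a b σ).card ≤ z ∧ z ≤ b := by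
  by_cases hne : ∃ z, σ z = true
  · obtain ⟨m, hm, hmin⟩ := Int.exists_least_of_bdd ⟨a, fun z hz => (hσ.mem hz).1⟩ hne
    have hiff : ∀ z, σ z = true ↔ m ≤ z ∧ z ≤ b := fun z =>
      ⟨fun hz => ⟨hmin z hz, (hσ.mem hz).2⟩, fun ⟨hmz, hzb⟩ =>
        (eq_or_lt_of_le hmz).elim (· ▸ hm) (hpack m z · hzb hm)⟩
    have ham := (hσ.mem hm).1
    have hparticles : particles a b σ = Finset.Icc m b := by
      ext z
      simp only [mem_particles, hiff, Finset.mem_Icc]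
      omega
    rw [hparticles, Int.card_Icc, hiff]
    omega
  · replace hne : ∀ z, σ z = false := by simpa using hne
    have hparticles : particles a b σ = ∅ := by
      ext z
      simp [mem_particles, hne]
    simp [hparticles, hne]

lemma IsRightPacked.eq_of_card_eq {τ : ℤ → Bool} (hσ : IsRightPacked b σ)
    (hτ : IsRightPacked b τ)     (hσ' : SupportedIn a b σ) (hτ' : SupportedIn a b τ)
    (hcard : (particles a b σ).card = (particles a b τ).card) : σ = τ := by
  ext z
  simp only [Bool.eq_iff_iff, hσ.apply_eq_true_iff hσ', hτ.apply_eq_true_iff hτ', hcard]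

lemma hasMobileCluster_of_le {x y : ℤ} (ha : a ≤ x) (hb : y ≤ b) (hxy : x < y)
    (hyx : y ≤ x + 2) (hx : σ x = true) (hy : σ y = true) : HasMobileCluster a b σ := by
  refine ⟨x, y, ⟨ha, by omega⟩, ⟨by omega, hb⟩, ?_, hx, hy⟩
  rw [abs_sub_comm, abs_of_pos (by omega)]
  omega

lemma HasMobileCluster.exists_le (hG : HasMobileCluster a b σ) :
    ∃ x y, x < y ∧ y ≤ x + 2 ∧ σ x = true ∧ σ y = true := by
  obtain ⟨x, y, -, -, hxy, hx, hy⟩ := hG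
  rcases lt_or_gt_of_ne (show x ≠ y by rintro rfl; simp at hxy) with h | h
  · exact ⟨x, y, h, by rw [abs_sub_comm, abs_of_pos (by omega)] at hxy; omega, hx, hy⟩
  · exact ⟨y, x, h, by rw [abs_of_pos (by omega)] at hxy; omega, hy, hx⟩

def AdvanceStep (a b : ℤ) (σ : ℤ → Bool) (p q : ℤ) : Prop :=
  p < q ∧ q ≤ b ∧ σ p = true ∧ σ q = false ∧
    HasMobileCluster a b (moveParticle σ p q) ∧
    ReflTransGen (JumpInside a b) σ (moveParticle σ p q)

lemma advanceStep_of_isolated_hole {x : ℤ} (ha : a ≤ x) (hb : x + 2 ≤ b) (h : σ x = true)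
    (h₁ : σ (x + 1) = false) (h₂ : σ (x + 2) = true) : AdvanceStep a b σ x (x + 1) :=
  ⟨by omega, by omega, h, h₁,
    hasMobileCluster_of_le (x := x + 1) (y := x + 2) (by omega) hb (by omega) (by omega)
      (by simp (disch := omega) [moveParticle_apply_of_eq_target])
      (by simp (disch := omega) [moveParticle_apply_of_ne, h₂]),
    .single (jumpInside_moveParticle_succ ha (by omega) h h₁ (.inr h₂))⟩

lemma advanceStep_of_pair {x : ℤ} (ha : a ≤ x) (hb : x + 2 ≤ b) (h : σ x = true)
    (h₁ : σ (x + 1) = true) (h₂ : σ (x + 2) = false) :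
    AdvanceStep a b σ (x + 1) (x + 2) := by
  have hjump := jumpInside_moveParticle_succ (a := a) (b := b) (z := x + 1) (by omega)
    (by omega) h₁ (by simpa [add_assoc]) (.inl (by simpa))
  refine ⟨by omega, hb, h₁, h₂, ?_, .single (by simpa [add_assoc] using hjump)⟩
  exact hasMobileCluster_of_le (x := x) (y := x + 2) ha hb (by omega) le_rfl
    (by simp (disch := omega) [moveParticle_apply_of_ne, h])
    (by simp (disch := omega) [moveParticle_apply_of_eq_target])

lemma advanceStep_of_fetch {s h : ℤ} (hs : a ≤ s) (hsh : s < h) (hb : h + 2 ≤ b)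
    (hσs : σ s = true) (hgap : ∀ t, s < t → t ≤ h → σ t = false)
    (h₁ : σ (h + 1) = true) (h₂ : σ (h + 2) = true) : AdvanceStep a b σ s h :=
  ⟨hsh, by omega, hσs, hgap h hsh le_rfl,
    hasMobileCluster_of_le (x := h) (y := h + 1) (by omega) (by omega) (by omega) (by omega)
      (by simp (disch := omega) [moveParticle_apply_of_eq_target])
      (by simp (disch := omega) [moveParticle_apply_of_ne, h₁]),
    reflTransGen_fetch hs hsh hb hσs hgap h₁ h₂⟩

lemma exists_topmost_pair (hσ : SupportedIn a b σ)
    (hpair : ∃ x, σ x = true ∧ σ (x + 1) = true) :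
    ∃ x, σ x = true ∧ σ (x + 1) = true ∧ σ (x + 2) = false := by
  obtain ⟨x, ⟨h, h₁⟩, hmax⟩ :=
    Int.exists_greatest_of_bdd ⟨b, fun x hx => (hσ.mem hx.1).2⟩ hpair
  refine ⟨x, h, h₁, Bool.eq_false_iff.mpr fun h₂ => ?_⟩
  have := hmax (x + 1) ⟨h₁, by simpa [add_assoc] using h₂⟩
  omega

lemma exists_fetch_of_not_isRightPacked (hσ : SupportedIn a b σ) (hb₁ : σ (b - 1) = true)
    (hb : σ b = true) (hpack : ¬IsRightPacked b σ) :
    ∃ s h, a ≤ s ∧ s < h ∧ h + 2 ≤ b ∧ σ s = true ∧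
      (∀ t, s < t → t ≤ h → σ t = false) ∧ σ (h + 1) = true ∧ σ (h + 2) = true := by
  simp only [IsRightPacked, not_forall, Bool.not_eq_true, exists_prop] at hpack
  obtain ⟨s₀, h₀, hs₀h₀, hh₀b, hs₀, hσh₀⟩ := hpack
  obtain ⟨h, ⟨s₁, hs₁h, hhb, hs₁, hσh⟩, hmax⟩ := Int.exists_greatest_of_bdd
    (P := fun h => ∃ s, s < h ∧ h ≤ b ∧ σ s = true ∧ σ h = false)
    ⟨b, fun _ ⟨_, _, hhb, _⟩ => hhb⟩ ⟨h₀, s₀, hs₀h₀, hh₀b, hs₀, hσh₀⟩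
  obtain ⟨s, ⟨hsh, hs⟩, hsmax⟩ := Int.exists_greatest_of_bdd
    (P := fun s => s < h ∧ σ s = true) ⟨h, fun _ hs => hs.1.le⟩ ⟨s₁, hs₁h, hs₁⟩
  have hfull : ∀ t, h < t → t ≤ b → σ t = true := fun t hht htb => by
    by_contra ht
    have := hmax t ⟨s, by omega, htb, hs, by simpa using ht⟩
    omega
  have hh₂ : h + 2 ≤ b := by
    by_contra
    obtain rfl | rfl : h = b - 1 ∨ h = b := by omega
    · simp [hb₁] at hσh
    · simp [hb] at hσh
  refine ⟨s, h, (hσ.mem hs).1, hsh, hh₂, hs, fun t hst hth => ?_,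
    hfull _ (by omega) (by omega), hfull _ (by omega) (by omega)⟩
  rcases eq_or_lt_of_le hth with rfl | hth
  · exact hσh
  · by_contra ht
    have := hsmax t ⟨hth, by simpa using ht⟩
    omega

lemma exists_advanceStep (hσ : SupportedIn a b σ) (hG : HasMobileCluster a b σ)
    (hpack : ¬IsRightPacked b σ) : ∃ p q, AdvanceStep a b σ p q := by
  by_cases hiso : ∃ x, σ x = true ∧ σ (x + 1) = false ∧ σ (x + 2) = true
  · obtain ⟨x, h, h₁, h₂⟩ := hiso
    exact ⟨_, _, advanceStep_of_isolated_hole (hσ.mem h).1 (hσ.mem h₂).2 h h₁ h₂⟩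
  have hpair : ∃ x, σ x = true ∧ σ (x + 1) = true := by
    obtain ⟨x, y, hxy, hyx, hx, hy⟩ := hG.exists_le
    obtain rfl | rfl : y = x + 1 ∨ y = x + 2 := by omega
    · exact ⟨x, hx, hy⟩
    · cases hx₁ : σ (x + 1)
      · exact absurd ⟨x, hx, hx₁, hy⟩ hiso
      · exact ⟨x, hx, hx₁⟩
  obtain ⟨x, h, h₁, h₂⟩ := exists_topmost_pair hσ hpair
  by_cases hb : x + 2 ≤ b
  · exact ⟨_, _, advanceStep_of_pair (hσ.mem h).1 hb h h₁ h₂⟩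
  obtain rfl : b = x + 1 := by have := (hσ.mem h₁).2; omega
  obtain ⟨s, t, hs, hst, htb, hσs, hgap, ht₁, ht₂⟩ :=
    exists_fetch_of_not_isRightPacked hσ (by simpa using h) h₁ hpack
  exact ⟨_, _, advanceStep_of_fetch hs hst htb hσs hgap ht₁ ht₂⟩

lemma exists_reflTransGen_isRightPacked (hσ : SupportedIn a b σ)
    (hG : HasMobileCluster a b σ) :
    ∃ τ, ReflTransGen (JumpInside a b) σ τ ∧ SupportedIn a b τ ∧ IsRightPacked b τ ∧
      (particles a b τ).card = (particles a b σ).card := by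
  induction hn : rightPotential a b σ using Nat.strong_induction_on generalizing σ with
  | _ n ih =>
    by_cases hpack : IsRightPacked b σ
    · exact ⟨σ, .refl, hσ, hpack, rfl⟩
    obtain ⟨p, q, hpq, hqb, hp, hq, hG', hR⟩ := exists_advanceStep hσ hG hpack
    have hpI : p ∈ particles a b σ := mem_particles.mpr ⟨hσ.mem hp, hp⟩
    have hqI : a ≤ q ∧ q ≤ b := ⟨by have := (hσ.mem hp).1; omega, hqb⟩
    obtain ⟨τ, hτ, hτσ, hτpack, hτcard⟩ :=
      ih _ (hn ▸ rightPotential_moveParticle_lt hpI hqI hq hpq) (hσ.moveParticle hqI) hG' rfl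
    exact ⟨τ, hR.trans hτ, hτσ, hτpack,
      hτcard.trans (card_particles_moveParticle hpI hqI hq)⟩

end

theorem connected_inside_interval (a b : ℤ) (σ σ' : ℤ → Bool)
    (hσ0 : ∀ z : ℤ, z ∉ Set.Icc a b → σ z = false)
    (hσ'0 : ∀ z : ℤ, z ∉ Set.Icc a b → σ' z = false)
    (hG : HasMobileCluster a b σ) (hG' : HasMobileCluster a b σ')
    (hcard : ((Finset.Icc a b).filter (fun z => σ z = true)).card =
      ((Finset.Icc a b).filter (fun z => σ' z = true)).card) :
    Relation.ReflTransGen (JumpInside a b) σ σ' := by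
  obtain ⟨τ, hστ, hτ, hτpack, hτcard⟩ := exists_reflTransGen_isRightPacked hσ0 hG
  obtain ⟨τ', hστ', hτ', hτpack', hτcard'⟩ := exists_reflTransGen_isRightPacked hσ'0 hG'
  obtain rfl : τ = τ' :=
    hτpack.eq_of_card_eq hτpack' hτ hτ' (hτcard.trans (hcard.trans hτcard'.symm))
  exact hστ.trans (symm hστ')
end

section
/- The set G_Λ of configurations on a finite interval Λ containing a mobile cluster is invariant under allowed jumps inside Λ (with empty boundary condition): if σ ∈ G_Λ and σ ↦ σ^{x,x+1} is allowed inside Λ, then σ^{x,x+1} ∈ G_Λ. -/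
namespace swapConf

variable (σ : ℤ → Bool) (x : ℤ)

@[simp]
lemma apply_left : swapConf σ x x = σ (x + 1) := by
  simp [swapConf]

@[simp]
lemma apply_right : swapConf σ x (x + 1) = σ x := by
  simp [swapConf]

lemma apply_of_ne {y : ℤ} (h₁ : y ≠ x) (h₂ : y ≠ x + 1) : swapConf σ x y = σ y := by
  simp [swapConf, h₁, h₂]

lemma exists_eq_true_of_ne {σ : ℤ → Bool} {x : ℤ} (h : σ x ≠ σ (x + 1)) :
    ∃ p, (p = x ∨ p = x + 1) ∧ swapConf σ x p = true := by
  cases hx : σ x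
  · exact ⟨x, Or.inl rfl, by simpa [hx] using h.symm⟩
  · exact ⟨x + 1, Or.inr rfl, by simp [hx]⟩

end swapConf

lemma abs_sub_eq_one_or_two_of_mem_pair {x p q : ℤ} (hp : p = x ∨ p = x + 1)
    (hq : q = x - 1 ∨ q = x + 2) : |p - q| = 1 ∨ |p - q| = 2 := by
  rcases hp with rfl | rfl <;> rcases hq with rfl | rfl <;> norm_num [abs_of_neg]

lemma mem_Icc_of_eq_true {a b : ℤ} {σ : ℤ → Bool} (hσ0 : ∀ z : ℤ, z ∉ Set.Icc a b → σ z = false)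
    {z : ℤ} (hz : σ z = true) : z ∈ Set.Icc a b := by
  by_contra h
  simp [hσ0 z h] at hz

theorem G_invariant_general (a b : ℤ) (σ : ℤ → Bool)
    (hσ0 : ∀ z : ℤ, z ∉ Set.Icc a b → σ z = false)
    (x : ℤ)
    (hx : x ∈ Set.Icc a b) (hx1 : x + 1 ∈ Set.Icc a b)
    (hallowed : (σ (x - 1) = true ∨ σ (x + 2) = true) ∧ σ x ≠ σ (x + 1)) :
    HasMobileCluster a b (swapConf σ x) := by
  obtain ⟨hout, hne⟩ := hallowed
  obtain ⟨p, hp, hσp⟩ := swapConf.exists_eq_true_of_ne hne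
  obtain ⟨q, hq, hσq⟩ : ∃ q, (q = x - 1 ∨ q = x + 2) ∧ σ q = true := by
    rcases hout with h | h
    exacts [⟨_, Or.inl rfl, h⟩, ⟨_, Or.inr rfl, h⟩]
  have hσq_swap : swapConf σ x q = true :=
    (swapConf.apply_of_ne σ x (by omega) (by omega)).trans hσq
  have hpΛ : p ∈ Set.Icc a b := by
    rcases hp with rfl | rfl
    exacts [hx, hx1]
  exact ⟨p, q, hpΛ, mem_Icc_of_eq_true hσ0 hσq, abs_sub_eq_one_or_two_of_mem_pair hp hq, hσp, hσq_swap⟩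

theorem G_invariant (a b : ℤ) (σ : ℤ → Bool)
    (hσ0 : ∀ z : ℤ, z ∉ Set.Icc a b → σ z = false)
    (hG : HasMobileCluster a b σ) (x : ℤ)
    (hx : x ∈ Set.Icc a b) (hx1 : x + 1 ∈ Set.Icc a b)
    (hallowed : (σ (x - 1) = true ∨ σ (x + 2) = true) ∧ σ x ≠ σ (x + 1)) :
    HasMobileCluster a b (swapConf σ x) :=
  G_invariant_general a b σ hσ0 x hx hx1 hallowed
end

section
/- If ν is a stationary probability measure for the generator L (ν(Lf)=0 for all local f) and σ is a finite configuration on Λ_n with ν(σ)=0 (probability of the cylinder set), then every configuration σ' connected to σ inside Λ_n also satisfies ν(σ')=0. -/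
open MeasureTheory

def IsLocalFn (f : (ℤ → Bool) → ℝ) : Prop :=
  ∃ s : Finset ℤ, ∀ η η' : ℤ → Bool, (∀ x ∈ s, η x = η' x) → f η = f η'

/-- The generator `L f(η) = Σ_x c_x(η) [f(η^{x,x+1}) − f(η)]`. -/
noncomputable def gen (c : ℤ → (ℤ → Bool) → ℝ) (f : (ℤ → Bool) → ℝ) (η : ℤ → Bool) : ℝ :=
  ∑' x : ℤ, c x η * (f (swapConf η x) - f η)

/-- The cylinder set of configurations agreeing with `σ` on `Λ_n = [-n,n]`. -/
def cyl (n : ℕ) (σ : ℤ → Bool) : Set (ℤ → Bool) :=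
  {η : ℤ → Bool | ∀ x ∈ Finset.Icc (-(n : ℤ)) (n : ℤ), η x = σ x}

/-- Zero extension outside `Λ_n`. -/
noncomputable def extZ (n : ℕ) (σ : ℤ → Bool) : ℤ → Bool :=
  fun y => if y ∈ Finset.Icc (-(n : ℤ)) (n : ℤ) then σ y else false

/-- An allowed jump inside `Λ_n`, with the constraint read off the zero extension. -/
def JumpIn (n : ℕ) (σ σ' : ℤ → Bool) : Prop :=
  ∃ z : ℤ, z ∈ Finset.Icc (-(n : ℤ)) (n : ℤ) ∧ z + 1 ∈ Finset.Icc (-(n : ℤ)) (n : ℤ) ∧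
    (extZ n σ (z - 1) = true ∨ extZ n σ (z + 2) = true) ∧ σ z ≠ σ (z + 1) ∧
    σ' = swapConf σ z


/-!
Test stationarity against the indicator `f` of a null cylinder. Since `f = 0` ν-a.e., the loss
terms `c_x f` of `L f` vanish a.e., so `0 = ν(L f) = Σ_x ν(c_x · f ∘ swap_x)`, a finite sum of
nonnegative terms; hence `c_x · f ∘ swap_x = 0` ν-a.e. for every `x`. For an allowed jump
`σ → σ'` swapping at `z`, the rate `c_z` is positive on the whole cylinder of `σ'`, and swapping
at `z` maps that cylinder into the cylinder of `σ`, so the cylinder of `σ'` is null too.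
-/

@[simp]
lemma swapConf_apply_left (η : ℤ → Bool) (z : ℤ) : swapConf η z z = η (z + 1) := by
  simp [swapConf]

@[simp]
lemma swapConf_apply_right (η : ℤ → Bool) (z : ℤ) : swapConf η z (z + 1) = η z := by
  simp [swapConf]

lemma swapConf_apply_of_ne {η : ℤ → Bool} {z y : ℤ} (h : y ≠ z) (h' : y ≠ z + 1) :
    swapConf η z y = η y := by
  simp [swapConf, h, h']

namespace IsLocalFn

variable {f g : (ℤ → Bool) → ℝ}

lemma exists_factor (hf : IsLocalFn f) :
    ∃ (s : Finset ℤ) (F : (s → Bool) → ℝ), ∀ η, f η = F (fun y => η y) := by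
  obtain ⟨s, hs⟩ := hf
  refine ⟨s, fun ξ => f fun y => if h : y ∈ s then ξ ⟨y, h⟩ else false, fun η => hs _ _ ?_⟩
  intro x hx
  simp [hx]

lemma measurable (hf : IsLocalFn f) : Measurable f := by
  obtain ⟨s, F, hF⟩ := hf.exists_factor
  rw [funext hF]
  exact (measurable_of_countable F).comp (measurable_pi_lambda _ fun y => measurable_pi_apply _)

lemma exists_abs_le (hf : IsLocalFn f) : ∃ C, ∀ η, |f η| ≤ C := by
  obtain ⟨s, F, hF⟩ := hf.exists_factor
  obtain ⟨C, hC⟩ := (Set.finite_range fun ξ => |F ξ|).bddAbove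
  exact ⟨C, fun η => hF η ▸ hC ⟨_, rfl⟩⟩

lemma integrable (hf : IsLocalFn f) (ν : Measure (ℤ → Bool)) [IsFiniteMeasure ν] :
    Integrable f ν := by
  obtain ⟨C, hC⟩ := hf.exists_abs_le
  exact .of_bound hf.measurable.aestronglyMeasurable C (ae_of_all _ hC)

lemma mul (hf : IsLocalFn f) (hg : IsLocalFn g) : IsLocalFn fun η => f η * g η := by
  obtain ⟨s, hs⟩ := hf
  obtain ⟨t, ht⟩ := hg
  refine ⟨s ∪ t, fun η η' h => ?_⟩
  dsimp only
  rw [hs η η' fun x hx => h x (Finset.mem_union_left t hx),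
    ht η η' fun x hx => h x (Finset.mem_union_right s hx)]

lemma comp_shift (hf : IsLocalFn f) (x : ℤ) : IsLocalFn fun η => f fun y => η (x + y) := by
  obtain ⟨s, hs⟩ := hf
  exact ⟨s.image (x + ·), fun η η' h => hs _ _ fun y hy => h _ (Finset.mem_image_of_mem _ hy)⟩

lemma comp_swapConf (hf : IsLocalFn f) (x : ℤ) : IsLocalFn fun η => f (swapConf η x) := by
  obtain ⟨s, hs⟩ := hf
  refine ⟨s ∪ {x, x + 1}, fun η η' h => hs _ _ fun y hy => ?_⟩
  have hx : η x = η' x := h x (by simp)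
  have hx1 : η (x + 1) = η' (x + 1) := h (x + 1) (by simp)
  unfold swapConf
  split_ifs
  exacts [hx1, hx, h y (Finset.mem_union_left _ hy)]

lemma exists_apply_swapConf_eq (hf : IsLocalFn f) :
    ∃ T : Finset ℤ, ∀ x ∉ T, ∀ η, f (swapConf η x) = f η := by
  obtain ⟨s, hs⟩ := hf
  refine ⟨s ∪ s.image (· - 1), fun x hx η => hs _ _ fun y hy => swapConf_apply_of_ne ?_ ?_⟩
  · rintro rfl
    exact hx (Finset.mem_union_left _ hy)
  · rintro rfl
    exact hx (Finset.mem_union_right _ (Finset.mem_image.2 ⟨x + 1, hy, by ring⟩))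

end IsLocalFn

section Stationarity

variable {c : ℤ → (ℤ → Bool) → ℝ} {f : (ℤ → Bool) → ℝ}

lemma gen_eq_sum {T : Finset ℤ} (hT : ∀ x ∉ T, ∀ η, f (swapConf η x) = f η) (η : ℤ → Bool) :
    gen c f η = ∑ x ∈ T, c x η * (f (swapConf η x) - f η) :=
  tsum_eq_sum fun x hx => by rw [hT x hx η, sub_self, mul_zero]

theorem ae_rate_mul_apply_swapConf_eq_zero {ν : Measure (ℤ → Bool)} [IsFiniteMeasure ν]
    (hc0 : ∀ x η, 0 ≤ c x η) (hcloc : ∀ x, IsLocalFn (c x))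
    (hf : IsLocalFn f) (hf0 : 0 ≤ f) (hfae : f =ᵐ[ν] 0) (hstat : ∫ η, gen c f η ∂ν = 0)
    (x : ℤ) : (fun η => c x η * f (swapConf η x)) =ᵐ[ν] 0 := by
  obtain ⟨T, hT⟩ := hf.exists_apply_swapConf_eq
  set g : ℤ → (ℤ → Bool) → ℝ := fun y η => c y η * f (swapConf η y)
  have hg0 : ∀ y η, 0 ≤ g y η := fun y η => mul_nonneg (hc0 y η) (hf0 _)
  have hgen : gen c f =ᵐ[ν] fun η => ∑ y ∈ insert x T, g y η := by
    filter_upwards [hfae] with η hη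
    rw [gen_eq_sum (T := insert x T)
      (fun y hy => hT y fun hyT => hy (Finset.mem_insert_of_mem hyT)) η]
    simp [g, hη]
  have hsum : (fun η => ∑ y ∈ insert x T, g y η) =ᵐ[ν] 0 := by
    rw [← integral_eq_zero_iff_of_nonneg (fun η => Finset.sum_nonneg fun y _ => hg0 y η)
      (integrable_finsetSum _ fun y _ => ((hcloc y).mul (hf.comp_swapConf y)).integrable ν),
      ← integral_congr_ae hgen, hstat]
  filter_upwards [hsum] with η hη
  exact (Finset.sum_eq_zero_iff_of_nonneg fun y _ => hg0 y η).1 hη x (Finset.mem_insert_self x T)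

end Stationarity

lemma extZ_eq_true_iff {n : ℕ} {σ : ℤ → Bool} {y : ℤ} :
    extZ n σ y = true ↔ y ∈ Finset.Icc (-(n : ℤ)) n ∧ σ y = true := by
  unfold extZ
  split_ifs <;> simp_all

lemma isLocalFn_indicator_cyl (n : ℕ) (σ : ℤ → Bool) : IsLocalFn ((cyl n σ).indicator 1) := by
  refine ⟨Finset.Icc (-(n : ℤ)) n, fun η η' h => ?_⟩
  have hmem : η ∈ cyl n σ ↔ η' ∈ cyl n σ := forall₂_congr fun x hx => by rw [h x hx]
  by_cases hη : η ∈ cyl n σ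
  · rw [Set.indicator_of_mem hη, Set.indicator_of_mem (hmem.1 hη)]
    rfl
  · rw [Set.indicator_of_notMem hη, Set.indicator_of_notMem (mt hmem.2 hη)]

lemma JumpIn.exists_swapConf_mem_cyl {n : ℕ} {σ σ' : ℤ → Bool} (hJ : JumpIn n σ σ') :
    ∃ z, ∀ η ∈ cyl n σ', swapConf η z ∈ cyl n σ ∧ (η (z - 1) = true ∨ η (z + 2) = true) := by
  obtain ⟨z, hz, hz1, hcon, -, rfl⟩ := hJ
  refine ⟨z, fun η hη => ⟨fun y hy => ?_, ?_⟩⟩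
  · unfold swapConf
    split_ifs with h h'
    · subst h; simpa using hη (y + 1) hz1
    · subst h'; simpa using hη z hz
    · rw [hη y hy, swapConf_apply_of_ne h h']
  · have hocc : ∀ y, y ≠ z → y ≠ z + 1 → extZ n σ y = true → η y = true := fun y h h' hy => by
      obtain ⟨hyΛ, hσy⟩ := extZ_eq_true_iff.1 hy
      rw [hη y hyΛ, swapConf_apply_of_ne h h', hσy]
    exact hcon.imp (hocc _ (by omega) (by omega)) (hocc _ (by omega) (by omega))

lemma measure_cyl_eq_zero_of_jumpIn {c : ℤ → (ℤ → Bool) → ℝ}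
    (hc0 : ∀ x η, 0 ≤ c x η) (hcloc : ∀ x, IsLocalFn (c x))
    (hpos : ∀ x η, η (x - 1) = true ∨ η (x + 2) = true → 0 < c x η)
    {ν : Measure (ℤ → Bool)} [IsFiniteMeasure ν]
    (hstat : ∀ f : (ℤ → Bool) → ℝ, IsLocalFn f → ∫ η, gen c f η ∂ν = 0)
    {n : ℕ} {σ σ' : ℤ → Bool} (hnull : ν (cyl n σ) = 0) (hJ : JumpIn n σ σ') :
    ν (cyl n σ') = 0 := by
  obtain ⟨z, hz⟩ := hJ.exists_swapConf_mem_cyl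
  have hf := isLocalFn_indicator_cyl n σ
  have hae := ae_rate_mul_apply_swapConf_eq_zero hc0 hcloc hf
    (Set.indicator_nonneg fun _ _ => zero_le_one) (indicator_meas_zero hnull) (hstat _ hf) z
  refine measure_mono_null (fun η hη => ?_) (ae_iff.1 hae)
  obtain ⟨hswap, hocc⟩ := hz η hη
  simp only [Set.mem_ofPred_eq, Set.indicator_of_mem hswap, Pi.one_apply, mul_one, Pi.zero_apply]
  exact (hpos z η hocc).ne'

theorem null_cylinder_propagates_general
    (c : ℤ → (ℤ → Bool) → ℝ)
    (hc0 : ∀ x η, 0 ≤ c x η)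
    (htrans : ∀ x (η : ℤ → Bool), c x η = c 0 (fun y => η (x + y)))
    (hlocal : IsLocalFn (c 0))
    (hpos : ∀ x η, 0 < c x η ↔ (η (x - 1) = true ∨ η (x + 2) = true))
    (ν : Measure (ℤ → Bool)) [IsProbabilityMeasure ν]
    (hstat : ∀ f : (ℤ → Bool) → ℝ, IsLocalFn f → ∫ η, gen c f η ∂ν = 0)
    (n : ℕ) (σ σ' : ℤ → Bool)
    (hnull : ν (cyl n σ) = 0)
    (hconn : Relation.ReflTransGen (JumpIn n) σ σ') :
    ν (cyl n σ') = 0 := by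
  have hcloc : ∀ x, IsLocalFn (c x) := fun x => by
    rw [show c x = _ from funext (htrans x)]
    exact hlocal.comp_shift x
  induction hconn with
  | refl => exact hnull
  | tail _ hJ ih =>
    exact measure_cyl_eq_zero_of_jumpIn hc0 hcloc (fun x η => (hpos x η).2) hstat ih hJ

theorem null_cylinder_propagates
    (c : ℤ → (ℤ → Bool) → ℝ)
    (hc0 : ∀ x η, 0 ≤ c x η)
    (htrans : ∀ x (η : ℤ → Bool), c x η = c 0 (fun y => η (x + y)))
    (hlocal : IsLocalFn (c 0))
    (hswap : ∀ x η, c x η = c x (swapConf η x))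
    (hpos : ∀ x η, 0 < c x η ↔ (η (x - 1) = true ∨ η (x + 2) = true))
    (ν : Measure (ℤ → Bool)) [IsProbabilityMeasure ν]
    (hstat : ∀ f : (ℤ → Bool) → ℝ, IsLocalFn f → ∫ η, gen c f η ∂ν = 0)
    (n : ℕ) (σ σ' : ℤ → Bool)
    (hnull : ν (cyl n σ) = 0)
    (hconn : Relation.ReflTransGen (JumpIn n) σ σ') :
    ν (cyl n σ') = 0 :=
  null_cylinder_propagates_general c hc0 htrans hlocal hpos ν hstat n σ σ' hnull hconn
end
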